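/- arXiv:1312.1445 — 5 statements merged into one kernel-verified Lean document; each statement's English description precedes it below -/
import Mathlib

section
/- Let X and Y be measurable spaces whose σ-algebras are countably generated, let X × Y carry the product σ-algebra with projection π_Y : X × Y → Y, let J be a perfect probability measure on X × Y, and let P_Y = J ∘ π_Y⁻¹ be its marginal on Y. Then there exists a Markov kernel f from Y to X × Y such that f ∘ P_Y = J (i.e. ∫_Y f(D | y) dP_Y(y) = J(D) for every measurable D ⊆ X × Y) and, for all measurable A ⊆ X, B ⊆ Y, C ⊆ Y, ∫_{(A×B)} 1_C(π_Y(x,y)) dJ = ∫_C f(A × B | y) dP_Y(y). -/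
open MeasureTheory ProbabilityTheory
open scoped ENNReal

/-- A probability measure `P` on `Y` is perfect if for every measurable function
`f : Y → ℝ` there exists a Borel set `E ⊆ f(Y)` with `P (f ⁻¹' E) = 1`. -/
def IsPerfect {Y : Type*} [MeasurableSpace Y] (P : Measure Y) : Prop :=
  ∀ f : Y → ℝ, Measurable f →
    ∃ E : Set ℝ, MeasurableSet E ∧ E ⊆ Set.range f ∧ P (f ⁻¹' E) = 1

/-!
Countable generation of `X` gives a measurable `φ : X → ℝ` whose preimages are all the measurable
sets of `X`, so `J` is determined by its image `ρ` under `(x, y) ↦ (y, φ x)`. As `ρ` lives on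
`Y × ℝ`, it disintegrates as `ρ = P_Y ⊗ κ`. Perfectness provides a Borel set `E ⊆ φ(X)` of full
measure, on which `φ` has a measurable right inverse `ψ`. Pushing `δ_y ⊗ κ y` forward along
`(y, r) ↦ (ψ r, y)` gives the kernel: the map `(x, y) ↦ (ψ (φ x), y)` preserves `J` because it
does not change `(y, φ x)` on `φ ⁻¹' E`.
-/

open MeasurableSpace in
lemma MeasurableSpace.le_comap_mapNatBool (X : Type*) [m : MeasurableSpace X]
    [CountablyGenerated X] : m ≤ MeasurableSpace.comap (mapNatBool X) inferInstance := by
  conv_lhs => rw [← generateFrom_natGeneratingSequence X]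
  refine generateFrom_le ?_
  rintro _ ⟨n, rfl⟩
  refine ⟨(fun g : ℕ → Bool => g n) ⁻¹' {true},
    measurable_pi_apply n (measurableSet_singleton true), ?_⟩
  ext x
  simp [mapNatBool]

lemma exists_measurable_real_le_comap (X : Type*) [m : MeasurableSpace X]
    [MeasurableSpace.CountablyGenerated X] :
    ∃ φ : X → ℝ, Measurable φ ∧ m ≤ MeasurableSpace.comap φ inferInstance := by
  obtain ⟨e, he⟩ := exists_measurableEmbedding_real (ℕ → Bool)
  refine ⟨e ∘ MeasurableSpace.mapNatBool X,
    he.measurable.comp (MeasurableSpace.measurable_mapNatBool X), ?_⟩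
  rw [← MeasurableSpace.comap_comp, he.comap_eq]
  exact MeasurableSpace.le_comap_mapNatBool X

section LeComap

variable {X Z : Type*} [m : MeasurableSpace X] [mZ : MeasurableSpace Z] {φ : X → Z}

lemma measurable_of_le_comap_of_measurable_comp {W : Type*} [MeasurableSpace W] {ψ : W → X}
    (hφ : m ≤ MeasurableSpace.comap φ mZ) (h : Measurable (φ ∘ ψ)) : Measurable ψ :=
  measurable_iff_comap_le.2 <| calc
    MeasurableSpace.comap ψ m ≤ MeasurableSpace.comap ψ (MeasurableSpace.comap φ mZ) :=
      MeasurableSpace.comap_mono hφ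
    _ = MeasurableSpace.comap (φ ∘ ψ) mZ := MeasurableSpace.comap_comp
    _ ≤ _ := h.comap_le

open Classical in
lemma exists_measurable_rightInvOn_of_le_comap [Nonempty X]
    (hφ : m ≤ MeasurableSpace.comap φ mZ) {E : Set Z} (hE : MeasurableSet E)
    (hEφ : E ⊆ Set.range φ) : ∃ ψ : Z → X, Measurable ψ ∧ Set.RightInvOn ψ φ E := by
  let x₀ : X := Classical.arbitrary X
  refine ⟨E.piecewise (Function.invFun φ) (fun _ => x₀), ?_, fun r hr => ?_⟩
  · refine measurable_of_le_comap_of_measurable_comp hφ ?_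
    have : φ ∘ E.piecewise (Function.invFun φ) (fun _ => x₀) = E.piecewise id (fun _ => φ x₀) := by
      funext r
      by_cases hr : r ∈ E
      · simp [hr, Function.invFun_eq (hEφ hr)]
      · simp [hr]
    rw [this]
    exact measurable_id.piecewise hE measurable_const
  · simp [hr, Function.invFun_eq (hEφ hr)]

lemma prod_le_comap_swap_of_le_comap {Y : Type*} [MeasurableSpace Y]
    (hφ : m ≤ MeasurableSpace.comap φ mZ) :
    (inferInstance : MeasurableSpace (X × Y))
      ≤ MeasurableSpace.comap (fun p : X × Y => (p.2, φ p.1)) inferInstance := by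
  change m.comap Prod.fst ⊔ _ ≤ MeasurableSpace.comap _ (MeasurableSpace.comap Prod.fst _ ⊔ _)
  rw [MeasurableSpace.comap_sup, MeasurableSpace.comap_comp, MeasurableSpace.comap_comp, sup_comm]
  refine sup_le_sup le_rfl ?_
  exact (MeasurableSpace.comap_mono hφ).trans_eq MeasurableSpace.comap_comp

end LeComap

lemma MeasureTheory.Measure.map_eq_self_of_comp_ae_eq {α β : Type*} [m : MeasurableSpace α]
    [mβ : MeasurableSpace β] {μ : Measure α} {g : α → α} {h : α → β} (hg : Measurable g)
    (hh : m ≤ MeasurableSpace.comap h mβ) (hgh : h ∘ g =ᵐ[μ] h) : μ.map g = μ := by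
  ext D hD
  obtain ⟨D', -, rfl⟩ := MeasurableSpace.measurableSet_comap.1 (hh D hD)
  rw [Measure.map_apply hg hD, ← Set.preimage_comp]
  exact measure_congr (hgh.preimage D')

lemma setLIntegral_eq_comp_inter_preimage_snd {X Y : Type*} [MeasurableSpace X]
    [MeasurableSpace Y] (f : Kernel Y (X × Y)) (hf : f.snd = Kernel.id) (μ : Measure Y)
    {C : Set Y} (hC : MeasurableSet C) {D : Set (X × Y)} (hD : MeasurableSet D) :
    ∫⁻ y in C, f y D ∂μ = (f ∘ₘ μ) (D ∩ Prod.snd ⁻¹' C) := by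
  have hf_preimage : ∀ y {s : Set Y}, MeasurableSet s → f y (Prod.snd ⁻¹' s) = s.indicator 1 y :=
    fun y s hs => by
      rw [← Kernel.snd_apply' f y hs, hf, Kernel.id_apply, Measure.dirac_apply' y hs]
  rw [Measure.bind_apply (hD.inter (measurable_snd hC)) f.aemeasurable,
    ← lintegral_indicator hC]
  refine lintegral_congr fun y => ?_
  by_cases hy : y ∈ C
  · rw [Set.indicator_of_mem hy, measure_inter_conull]
    rw [← Set.preimage_compl, hf_preimage y hC.compl, Set.indicator_of_notMem (by simpa using hy)]
  · rw [Set.indicator_of_notMem hy]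
    refine (measure_mono_null Set.inter_subset_right ?_).symm
    rw [hf_preimage y hC, Set.indicator_of_notMem hy]

lemma exists_markovKernel_snd_eq_id_comp_eq {X Y Z : Type*} [mX : MeasurableSpace X]
    [MeasurableSpace Y] [mZ : MeasurableSpace Z] [StandardBorelSpace Z] [Nonempty Z] [Nonempty X]
    (J : Measure (X × Y)) [IsFiniteMeasure J] {φ : X → Z} (hφm : Measurable φ)
    (hφ : mX ≤ MeasurableSpace.comap φ mZ) {E : Set Z} (hE : MeasurableSet E)
    (hEφ : E ⊆ Set.range φ) (hJE : ∀ᵐ p ∂J, φ p.1 ∈ E) :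
    ∃ f : Kernel Y (X × Y), IsMarkovKernel f ∧ f.snd = Kernel.id ∧ f ∘ₘ J.map Prod.snd = J := by
  obtain ⟨ψ, hψm, hψφ⟩ := exists_measurable_rightInvOn_of_le_comap hφ hE hEφ
  let Φ : X × Y → Y × Z := fun p => (p.2, φ p.1)
  let Ψ : Y × Z → X × Y := fun q => (ψ q.2, q.1)
  have hΦ : Measurable Φ := by fun_prop
  have hΨ : Measurable Ψ := by fun_prop
  let κ := (J.map Φ).condKernel
  refine ⟨(Kernel.id ×ₖ κ).map Ψ, Kernel.IsMarkovKernel.map _ hΨ, ?_, ?_⟩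
  · calc ((Kernel.id ×ₖ κ).map Ψ).snd = (Kernel.id ×ₖ κ).map Prod.fst :=
          Kernel.snd_map_prod _ (f := fun q : Y × Z => ψ q.2) (by fun_prop)
      _ = Kernel.id := by rw [← Kernel.fst_eq, Kernel.fst_prod]
  have hΦΨΦ : Φ ∘ Ψ ∘ Φ =ᵐ[J] Φ := by
    filter_upwards [hJE] with p hp
    simp [Φ, Ψ, hψφ hp]
  calc (Kernel.id ×ₖ κ).map Ψ ∘ₘ J.map Prod.snd
      = ((Kernel.id ×ₖ κ) ∘ₘ (J.map Φ).fst).map Ψ := by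
        rw [Measure.map_comp _ _ hΨ, Measure.fst, Measure.map_map measurable_fst hΦ]
        rfl
    _ = (J.map Φ).map Ψ := by rw [← Measure.compProd_eq_comp_prod, Measure.disintegrate]
    _ = J.map (Ψ ∘ Φ) := Measure.map_map hΨ hΦ
    _ = J := Measure.map_eq_self_of_comp_ae_eq (hΨ.comp hΦ) (prod_le_comap_swap_of_le_comap hφ)
      hΦΨΦ

theorem exists_regular_conditional_general
    {X Y : Type*} [MeasurableSpace X] [MeasurableSpace Y]
    [MeasurableSpace.CountablyGenerated X]
    (J : Measure (X × Y)) [IsProbabilityMeasure J] (hJ : IsPerfect J) :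
    ∃ f : Kernel Y (X × Y), IsMarkovKernel f ∧
      (∀ D : Set (X × Y), MeasurableSet D →
        ∫⁻ y, f y D ∂(J.map Prod.snd) = J D) ∧
      (∀ (A : Set X) (B C : Set Y), MeasurableSet A → MeasurableSet B → MeasurableSet C →
        ∫⁻ p in A ×ˢ B, C.indicator (fun _ => (1 : ℝ≥0∞)) p.2 ∂J
          = ∫⁻ y in C, f y (A ×ˢ B) ∂(J.map Prod.snd)) := by
  have : Nonempty X := (nonempty_of_isProbabilityMeasure J).map Prod.fst
  obtain ⟨φ, hφm, hφ⟩ := exists_measurable_real_le_comap X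
  obtain ⟨E, hE, hEφ, hJE⟩ := hJ (φ ∘ Prod.fst) (hφm.comp measurable_fst)
  have hE_ae : ∀ᵐ p ∂J, φ p.1 ∈ E :=
    (ae_iff_measure_eq (hφm.comp measurable_fst hE).nullMeasurableSet).2
      (hJE.trans measure_univ.symm)
  obtain ⟨f, hf, hf_snd, hf_comp⟩ := exists_markovKernel_snd_eq_id_comp_eq J hφm hφ hE
    (hEφ.trans (Set.range_comp_subset_range _ _)) hE_ae
  refine ⟨f, hf, fun D hD => ?_, fun A B C hA hB hC => ?_⟩
  · rw [← Measure.bind_apply hD f.aemeasurable, hf_comp]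
  · rw [setLIntegral_eq_comp_inter_preimage_snd f hf_snd _ hC (hA.prod hB), hf_comp,
      Set.inter_comm, ← Measure.restrict_apply (measurable_snd hC),
      ← lintegral_indicator_one (measurable_snd hC)]
    rfl

/-- Existence of a regular conditional probability (Markov kernel) `f : Y → X × Y`
disintegrating a perfect joint probability measure `J` over its marginal
`P_Y = J ∘ π_Y⁻¹`. -/
theorem exists_regular_conditional
    {X Y : Type*} [MeasurableSpace X] [MeasurableSpace Y]
    [MeasurableSpace.CountablyGenerated X] [MeasurableSpace.CountablyGenerated Y]
    (J : Measure (X × Y)) [IsProbabilityMeasure J] (hJ : IsPerfect J) :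
    ∃ f : Kernel Y (X × Y), IsMarkovKernel f ∧
      (∀ D : Set (X × Y), MeasurableSet D →
        ∫⁻ y, f y D ∂(J.map Prod.snd) = J D) ∧
      (∀ (A : Set X) (B C : Set Y), MeasurableSet A → MeasurableSet B → MeasurableSet C →
        ∫⁻ p in A ×ˢ B, C.indicator (fun _ => (1 : ℝ≥0∞)) p.2 ∂J
          = ∫⁻ y in C, f y (A ×ˢ B) ∂(J.map Prod.snd)) :=
  exists_regular_conditional_general J hJ
end

section
/- Let X and Y be measurable spaces whose σ-algebras are countably generated and let J be a perfect probability measure on X × Y (product σ-algebra) with marginals P_X on X and P_Y on Y. Then there exist Markov kernels I : Y → X and S : X → Y such that for all measurable U ⊆ X and V ⊆ Y, ∫_U S(V | x) dP_X(x) = J(U × V) = ∫_V I(U | y) dP_Y(y). -/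
/-!
Since `Y` is countably generated, its σ-algebra is `σ(g)` for a measurable `g : Y → ℝ`.
Disintegrate the image of `J` on `X × ℝ` (where `ℝ` is standard Borel) and transport the
conditional kernel back to `Y` along a measurable section `s` of `g` over a Borel set
`E ⊆ g(Y)` of full measure, which perfectness provides. As every measurable subset of `Y` is a
`g`-preimage, `y` and `s (g y)` lie in the same measurable sets whenever `g y ∈ E`, so the
transported kernel is a conditional distribution of `J` given `X`. Swapping the coordinates
gives the kernel `I`.
-/

open MeasureTheory ProbabilityTheory
open scoped ENNReal

theorem IsPerfect.map {Ω Y : Type*} [MeasurableSpace Ω] [MeasurableSpace Y] {μ : Measure Ω}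
    (hμ : IsPerfect μ) {φ : Ω → Y} (hφ : Measurable φ) : IsPerfect (μ.map φ) := by
  intro f hf
  obtain ⟨E, hE, hEf, hμE⟩ := hμ (f ∘ φ) (hf.comp hφ)
  exact ⟨E, hE, hEf.trans (Set.range_comp_subset_range φ f), by rwa [Measure.map_apply hφ (hf hE)]⟩

theorem MeasurableSpace.exists_comap_real_eq (α : Type*) [m : MeasurableSpace α]
    [CountablyGenerated α] : ∃ f : α → ℝ, MeasurableSpace.comap f inferInstance = m := by
  obtain ⟨e, he⟩ := exists_measurableEmbedding_real (ℕ → Bool)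
  refine ⟨e ∘ mapNatBool α, ?_⟩
  rw [← comap_comp, he.comap_eq]
  refine le_antisymm (measurable_mapNatBool α).comap_le ?_
  conv_lhs => rw [← generateFrom_natGeneratingSequence α]
  refine generateFrom_le ?_
  rintro _ ⟨n, rfl⟩
  refine ⟨(fun y ↦ y n) ⁻¹' {true}, measurable_pi_apply n (measurableSet_singleton true), ?_⟩
  ext x
  simp [mapNatBool]

theorem exists_measurable_leftInvOn_of_comap_eq {Y : Type*} [mY : MeasurableSpace Y]
    [Nonempty Y] {g : Y → ℝ} (hg : MeasurableSpace.comap g inferInstance = mY) {E : Set ℝ}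
    (hE : MeasurableSet E) (hEg : E ⊆ Set.range g) :
    ∃ s : ℝ → Y, Measurable s ∧ Set.LeftInvOn g s E := by
  classical
  let y₀ : Y := Classical.arbitrary Y
  let s : ℝ → Y := E.piecewise (Function.invFun g) fun _ ↦ y₀
  have hgs : g ∘ s = E.piecewise id fun _ ↦ g y₀ := by
    funext t
    by_cases ht : t ∈ E
    · simp [s, ht, Function.invFun_eq (hEg ht)]
    · simp [s, ht]
  refine ⟨s, ?_, fun t ht ↦ by simpa [ht] using congr_fun hgs t⟩
  rw [measurable_iff_comap_le, ← hg, MeasurableSpace.comap_comp, hgs, ← measurable_iff_comap_le]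
  exact measurable_id.piecewise hE measurable_const

theorem exists_markovKernel_setLIntegral_eq_measure_prod {X Y : Type*} [MeasurableSpace X]
    [MeasurableSpace Y] [MeasurableSpace.CountablyGenerated Y] (J : Measure (X × Y))
    [IsProbabilityMeasure J] (hJ : IsPerfect (J.map Prod.snd)) :
    ∃ S : Kernel X Y, IsMarkovKernel S ∧ ∀ U V, MeasurableSet U → MeasurableSet V →
      ∫⁻ x in U, S x V ∂(J.map Prod.fst) = J (U ×ˢ V) := by
  obtain ⟨g, hg⟩ := MeasurableSpace.exists_comap_real_eq Y
  have hgm : Measurable g := measurable_iff_comap_le.2 hg.le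
  obtain ⟨E, hE, hEg, hJE⟩ := hJ g hgm
  have : IsProbabilityMeasure (J.map Prod.snd) :=
    Measure.isProbabilityMeasure_map measurable_snd.aemeasurable
  have : Nonempty Y := nonempty_of_isProbabilityMeasure (J.map Prod.snd)
  obtain ⟨s, hs, hsg⟩ := exists_measurable_leftInvOn_of_comap_eq hg hE hEg
  let ρ := J.map (Prod.map id g)
  refine ⟨ρ.condKernel.map s, Kernel.IsMarkovKernel.map _ hs, fun U V hU hV ↦ ?_⟩
  have hρ : ρ.fst = J.map Prod.fst := by
    rw [Measure.fst, Measure.map_map measurable_fst (measurable_id.prodMap hgm)]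
    rfl
  have hgE : ∀ᵐ p ∂J, g p.2 ∈ E := ae_of_ae_map measurable_snd.aemeasurable <|
    (ae_mem_iff_measure_eq (hgm hE).nullMeasurableSet).2 (by rw [hJE, measure_univ])
  have hsgV : J (U ×ˢ ((s ∘ g) ⁻¹' V)) = J (U ×ˢ V) := by
    obtain ⟨B, -, rfl⟩ : ∃ B, MeasurableSet B ∧ g ⁻¹' B = V := by rw [← hg] at hV; exact hV
    refine measure_congr (Filter.eventuallyEq_set.2 (hgE.mono fun p hp ↦ ?_))
    simp [hsg hp]
  calc ∫⁻ x in U, ρ.condKernel.map s x V ∂J.map Prod.fst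
      = ∫⁻ x in U, ρ.condKernel x (s ⁻¹' V) ∂ρ.fst := by
        simp_rw [hρ, Kernel.map_apply' _ hs _ hV]
    _ = ρ (U ×ˢ (s ⁻¹' V)) := Measure.setLIntegral_condKernel_eq_measure_prod hU (hs hV)
    _ = J (U ×ˢ ((s ∘ g) ⁻¹' V)) :=
        Measure.map_apply (measurable_id.prodMap hgm) (hU.prod (hs hV))
    _ = J (U ×ˢ V) := hsgV

/-- Given a perfect joint probability measure `J` on `X × Y` (with `X`, `Y` countably
generated), there exist Markov kernels `S : X → Y` and `I : Y → X` such that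
`∫_U S(V | x) dP_X = J (U ×ˢ V) = ∫_V I(U | y) dP_Y` for all measurable `U`, `V`,
where `P_X` and `P_Y` are the marginals of `J`. -/
theorem exists_conditionals_of_joint
    {X Y : Type*} [MeasurableSpace X] [MeasurableSpace Y]
    [MeasurableSpace.CountablyGenerated X] [MeasurableSpace.CountablyGenerated Y]
    (J : Measure (X × Y)) [IsProbabilityMeasure J] (hJ : IsPerfect J) :
    ∃ (S : Kernel X Y) (I : Kernel Y X), IsMarkovKernel S ∧ IsMarkovKernel I ∧
      ∀ (U : Set X) (V : Set Y), MeasurableSet U → MeasurableSet V →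
        (∫⁻ x in U, S x V ∂(J.map Prod.fst) = J (U ×ˢ V) ∧
          J (U ×ˢ V) = ∫⁻ y in V, I y U ∂(J.map Prod.snd)) := by
  obtain ⟨S, hS, hSJ⟩ :=
    exists_markovKernel_setLIntegral_eq_measure_prod J (hJ.map measurable_snd)
  have : IsProbabilityMeasure (J.map Prod.swap) :=
    Measure.isProbabilityMeasure_map measurable_swap.aemeasurable
  obtain ⟨I, hI, hIJ⟩ := exists_markovKernel_setLIntegral_eq_measure_prod (J.map Prod.swap)
    ((hJ.map measurable_swap).map measurable_snd)
  refine ⟨S, I, hS, hI, fun U V hU hV ↦ ⟨hSJ U V hU hV, ?_⟩⟩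
  have hIUV := hIJ V U hV hU
  rw [Measure.map_map measurable_fst measurable_swap,
    Measure.map_apply measurable_swap (hV.prod hU), Set.preimage_swap_prod] at hIUV
  exact hIUV.symm
end

section
/- Let X, Y, Z be measurable spaces and let g : Z → Y^X be measurable into the evaluation σ-algebra on Y^X. Then the uncurried map X × Z → Y, (x, z) ↦ (g(z))(x), is measurable with respect to the tensor σ-algebra on X × Z. Together with the currying operation this establishes a bijective correspondence between maps X ⊗ Z → Y measurable for the tensor σ-algebra and measurable maps Z → Y^X. -/
/-- The tensor σ-algebra on `X × Z`: the largest σ-algebra making every constant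
graph map `z ↦ (x, z)` (for `x ∈ X`) and `x ↦ (x, z)` (for `z ∈ Z`) measurable. -/
def tensorSigma {X Z : Type*} (mX : MeasurableSpace X) (mZ : MeasurableSpace Z) :
    MeasurableSpace (X × Z) :=
  (⨅ x : X, MeasurableSpace.map (fun z => (x, z)) mZ) ⊓
    (⨅ z : Z, MeasurableSpace.map (fun x => (x, z)) mX)

/-- `Y^X`: the set of measurable functions from `X` to `Y`. -/
def MeasFn (X Y : Type*) [MeasurableSpace X] [MeasurableSpace Y] :=
  {f : X → Y // Measurable f}

/-- The evaluation σ-algebra on `Y^X`: the smallest σ-algebra making every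
point-evaluation map `f ↦ f x` measurable. -/
def evalSigma (X Y : Type*) [MeasurableSpace X] [mY : MeasurableSpace Y] :
    MeasurableSpace (MeasFn X Y) :=
  ⨆ x : X, MeasurableSpace.comap (fun f : MeasFn X Y => f.1 x) mY

/-!
A map is measurable for the tensor σ-algebra iff it is separately measurable in each variable,
and a map into `Y^X` is measurable for the evaluation σ-algebra iff each of its evaluations is.
Both sides of the correspondence therefore ask for the same thing of `(x, z) ↦ F (x, z)`, and
currying is the identity on underlying functions.
-/

open MeasureTheory

section

variable {X Y Z : Type*} [mX : MeasurableSpace X] [mY : MeasurableSpace Y] [mZ : MeasurableSpace Z]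

theorem measurable_tensorSigma_iff {F : X × Z → Y} :
    Measurable[tensorSigma mX mZ] F ↔
      (∀ x, Measurable fun z => F (x, z)) ∧ ∀ z, Measurable fun x => F (x, z) := by
  simp only [measurable_iff_le_map, tensorSigma, MeasurableSpace.map_inf,
    MeasurableSpace.map_iInf, MeasurableSpace.map_comp, le_inf_iff, le_iInf_iff]
  rfl

theorem measurable_evalSigma_iff {g : Z → MeasFn X Y} :
    Measurable[_, evalSigma X Y] g ↔ ∀ x, Measurable fun z => (g z).1 x := by
  simp only [measurable_iff_comap_le, evalSigma, MeasurableSpace.comap_iSup,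
    MeasurableSpace.comap_comp, iSup_le_iff]
  rfl

theorem measurable_tensorSigma_uncurry {g : Z → MeasFn X Y}
    (hg : Measurable[_, evalSigma X Y] g) :
    Measurable[tensorSigma mX mZ] fun p : X × Z => (g p.2).1 p.1 :=
  measurable_tensorSigma_iff.2 ⟨measurable_evalSigma_iff.1 hg, fun z => (g z).2⟩

def curryTensorSigmaEquiv :
    {F : X × Z → Y // Measurable[tensorSigma mX mZ] F} ≃
      {g : Z → MeasFn X Y // Measurable[_, evalSigma X Y] g} where
  toFun F := ⟨fun z => ⟨fun x => F.1 (x, z), (measurable_tensorSigma_iff.1 F.2).2 z⟩,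
    measurable_evalSigma_iff.2 (measurable_tensorSigma_iff.1 F.2).1⟩
  invFun g := ⟨fun p => (g.1 p.2).1 p.1, measurable_tensorSigma_uncurry g.2⟩
  left_inv _ := rfl
  right_inv _ := rfl

end

/-- If `g : Z → Y^X` is measurable for the evaluation σ-algebra, then the uncurried
map `(x, z) ↦ (g z) x` is measurable for the tensor σ-algebra on `X × Z`; together
with currying this sets up a bijective correspondence between tensor-measurable
maps `X ⊗ Z → Y` and measurable maps `Z → Y^X`. -/
theorem uncurry_measurable_and_bijective_correspondence
    {X Y Z : Type*} [mX : MeasurableSpace X] [mY : MeasurableSpace Y]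
    [mZ : MeasurableSpace Z] :
    (∀ g : Z → MeasFn X Y, @Measurable Z (MeasFn X Y) mZ (evalSigma X Y) g →
      @Measurable (X × Z) Y (tensorSigma mX mZ) mY (fun p => (g p.2).1 p.1)) ∧
    ∃ e : {F : X × Z → Y // @Measurable (X × Z) Y (tensorSigma mX mZ) mY F} ≃
        {g : Z → MeasFn X Y // @Measurable Z (MeasFn X Y) mZ (evalSigma X Y) g},
      ∀ (F : {F : X × Z → Y // @Measurable (X × Z) Y (tensorSigma mX mZ) mY F})
        (z : Z) (x : X), ((e F).1 z).1 x = F.1 (x, z) :=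
  ⟨fun _ hg => measurable_tensorSigma_uncurry hg, curryTensorSigmaEquiv, fun _ _ _ => rfl⟩
end

section
/- Let X and Y be measurable spaces and Y^X the set of measurable functions from X to Y with the evaluation σ-algebra. The class of subsets of Y^X consisting of the empty set together with all finite intersections ⋂_{i=1}^n ev_{x_i}⁻¹(A_i), where {x_1, …, x_n} is a separated subset of X and each A_i is a nonempty proper measurable subset of Y, is a π-system, and it generates the evaluation σ-algebra on Y^X. -/
/-- A subset `S` of a measurable space is separated if any two distinct points of
`S` can be separated by a measurable set. -/
def Separated {X : Type*} [MeasurableSpace X] (S : Set X) : Prop :=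
  ∀ x ∈ S, ∀ y ∈ S, x ≠ y → ∃ B : Set X, MeasurableSet B ∧ x ∈ B ∧ y ∉ B

/-- The class `𝓔` of subsets of `Y^X`: the empty set together with all finite
intersections `⋂ i, ev_{x i}⁻¹ (A i)` where `{x 1, …, x n}` is a separated subset of
`X` and each `A i` is a nonempty proper measurable subset of `Y`. -/
def evalPiSystem (X Y : Type*) [MeasurableSpace X] [MeasurableSpace Y] :
    Set (Set (MeasFn X Y)) :=
  {∅} ∪ {s | ∃ n : ℕ, 0 < n ∧ ∃ (x : Fin n → X) (A : Fin n → Set Y),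
    Separated (Set.range x) ∧
    (∀ i, MeasurableSet (A i) ∧ (A i).Nonempty ∧ A i ≠ Set.univ) ∧
    s = ⋂ i, (fun f : MeasFn X Y => f.1 (x i)) ⁻¹' A i}


/-! A measurable function cannot tell apart two points with the same measurable atom, so in a
finite intersection `⋂ i, ev_{x i}⁻¹ (A i)` the conditions at points of one atom merge into a
single condition `ev_x⁻¹ (⋂ A i)`. Either one merged set is empty, or all of them are nonempty and
proper, and representatives of distinct atoms are separated. Hence finite intersections of sets
`ev_x⁻¹ A` with `A` measurable and proper lie in the class, which gives both claims. -/

open Set MeasurableSpace MeasureTheory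

section MeasurableAtom

variable {X : Type*} [MeasurableSpace X]

theorem separated_iff_injOn_measurableAtom {S : Set X} :
    Separated S ↔ S.InjOn measurableAtom := by
  constructor
  · intro hS x hx y hy hxy
    by_contra hne
    obtain ⟨B, hB, hxB, hyB⟩ := hS x hx y hy hne
    exact hyB (measurableAtom_subset hB hxB (hxy ▸ mem_measurableAtom_self y))
  · intro hS x hx y hy hne
    have hyx : y ∉ measurableAtom x := fun h ↦
      hne (hS hx hy (measurableAtom_eq_of_mem h).symm)
    simp only [measurableAtom, mem_iInter, not_forall] at hyx
    obtain ⟨B, hxB, hB, hyB⟩ := hyx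
    exact ⟨B, hB, hxB, hyB⟩

theorem Measurable.apply_mem_iff_of_measurableAtom_eq {Y : Type*} [MeasurableSpace Y]
    {f : X → Y} (hf : Measurable f) {s : Set Y} (hs : MeasurableSet s) {x y : X}
    (h : measurableAtom x = measurableAtom y) : f x ∈ s ↔ f y ∈ s :=
  ⟨fun hx ↦ mem_of_mem_measurableAtom (s := f ⁻¹' s) (h ▸ mem_measurableAtom_self y) (hf hs) hx,
    fun hy ↦ mem_of_mem_measurableAtom (s := f ⁻¹' s) (h ▸ mem_measurableAtom_self x) (hf hs) hy⟩

end MeasurableAtom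

section EvalPiSystem

variable {X Y : Type*} [MeasurableSpace X] [MeasurableSpace Y] {ι : Type*}

theorem iInter_preimage_eval_mem_evalPiSystem_of_separated [Finite ι] [Nonempty ι]
    {x : ι → X} {A : ι → Set Y} (hx : Separated (range x))
    (hA : ∀ i, MeasurableSet (A i) ∧ (A i).Nonempty ∧ A i ≠ univ) :
    (⋂ i, (fun f : MeasFn X Y ↦ f.1 (x i)) ⁻¹' A i) ∈ evalPiSystem X Y := by
  let e := (Finite.equivFin ι).symm
  refine Or.inr ⟨Nat.card ι, Nat.card_pos, x ∘ e, A ∘ e, ?_, fun k ↦ hA (e k), ?_⟩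
  · rwa [e.surjective.range_comp]
  · exact (e.surjective.iInter_comp fun i ↦ (fun f : MeasFn X Y ↦ f.1 (x i)) ⁻¹' A i).symm

theorem iInter_preimage_eval_mem_evalPiSystem [Finite ι] [Nonempty ι]
    {x : ι → X} {A : ι → Set Y} (hA : ∀ i, MeasurableSet (A i)) (hA_ne : ∀ i, A i ≠ univ) :
    (⋂ i, (fun f : MeasFn X Y ↦ f.1 (x i)) ⁻¹' A i) ∈ evalPiSystem X Y := by
  let atom : ι → Set X := fun i ↦ measurableAtom (x i)
  let rep : range atom → ι := rangeSplitting atom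
  let C : range atom → Set Y := fun a ↦ ⋂ (i) (_ : atom i = a), A i
  have hC_meas (a : range atom) : MeasurableSet (C a) :=
    .iInter fun i ↦ .iInter fun _ ↦ hA i
  have hC_subset (a : range atom) : C a ⊆ A (rep a) :=
    biInter_subset_of_mem (apply_rangeSplitting atom a)
  have hmerge : (⋂ i, (fun f : MeasFn X Y ↦ f.1 (x i)) ⁻¹' A i) =
      ⋂ a, (fun f : MeasFn X Y ↦ f.1 (x (rep a))) ⁻¹' C a := by
    ext f
    have hf (i : ι) (a : range atom) (hi : atom i = a) :
        f.1 (x (rep a)) ∈ A i ↔ f.1 (x i) ∈ A i :=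
      f.2.apply_mem_iff_of_measurableAtom_eq (hA i) ((apply_rangeSplitting atom a).trans hi.symm)
    simp only [mem_iInter, mem_preimage, C]
    exact ⟨fun h a i hi ↦ (hf i a hi).2 (h i),
      fun h i ↦ (hf i ⟨atom i, mem_range_self i⟩ rfl).1 (h _ i rfl)⟩
  rw [hmerge]
  by_cases hC : ∀ a, (C a).Nonempty
  · have : Nonempty (range atom) := (range_nonempty atom).to_subtype
    refine iInter_preimage_eval_mem_evalPiSystem_of_separated ?_
      fun a ↦ ⟨hC_meas a, hC a, fun h ↦ hA_ne _ (univ_subset_iff.mp (h ▸ hC_subset a))⟩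
    rw [separated_iff_injOn_measurableAtom]
    rintro _ ⟨a, rfl⟩ _ ⟨b, rfl⟩ hab
    have hab' : a = b := Subtype.ext <|
      (apply_rangeSplitting atom a).symm.trans (hab.trans (apply_rangeSplitting atom b))
    rw [hab']
  · push Not at hC
    obtain ⟨a, ha⟩ := hC
    refine Or.inl (eq_empty_of_subset_empty fun f hf ↦ ?_)
    simpa only [ha, preimage_empty] using mem_iInter.mp hf a

theorem evalPiSystem_isPiSystem : IsPiSystem (evalPiSystem X Y) := by
  rintro _ (rfl | ⟨n, hn, xs, As, -, hAs, rfl⟩) _ (rfl | ⟨m, -, xt, At, -, hAt, rfl⟩) hst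
  iterate 3 simp at hst
  have : Nonempty (Fin n ⊕ Fin m) := ⟨.inl ⟨0, hn⟩⟩
  have hmem := iInter_preimage_eval_mem_evalPiSystem (X := X) (x := Sum.elim xs xt)
    (A := Sum.elim As At) (Sum.forall.2 ⟨fun i ↦ (hAs i).1, fun j ↦ (hAt j).1⟩)
    (Sum.forall.2 ⟨fun i ↦ (hAs i).2.2, fun j ↦ (hAt j).2.2⟩)
  simpa only [iInter_sum, Sum.elim_inl, Sum.elim_inr] using hmem

theorem measurable_eval_evalSigma (x : X) :
    Measurable[evalSigma X Y] fun f : MeasFn X Y ↦ f.1 x :=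
  measurable_iff_comap_le.mpr <|
    le_iSup (fun x ↦ MeasurableSpace.comap (fun f : MeasFn X Y ↦ f.1 x) _) x

theorem generateFrom_evalPiSystem_le : generateFrom (evalPiSystem X Y) ≤ evalSigma X Y := by
  refine generateFrom_le ?_
  rintro _ (rfl | ⟨n, -, x, A, -, hA, rfl⟩)
  · exact (evalSigma X Y).measurableSet_empty
  · exact .iInter fun i ↦ measurable_eval_evalSigma (x i) (hA i).1

theorem evalSigma_le_generateFrom_evalPiSystem :
    evalSigma X Y ≤ generateFrom (evalPiSystem X Y) := by
  refine iSup_le fun x ↦ comap_le_iff_le_map.mpr fun A hA ↦ ?_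
  by_cases hA_univ : A = univ
  · rw [hA_univ]
    exact MeasurableSet.univ
  · have := iInter_preimage_eval_mem_evalPiSystem (X := X) (Y := Y) (x := fun _ : Unit ↦ x)
      (fun _ ↦ hA) fun _ ↦ hA_univ
    exact measurableSet_generateFrom (by simpa only [iInter_const] using this)

end EvalPiSystem

/-- The class `𝓔` is a π-system and generates the evaluation σ-algebra on `Y^X`. -/
theorem evalPiSystem_isPiSystem_generates
    {X Y : Type*} [mX : MeasurableSpace X] [mY : MeasurableSpace Y] :
    IsPiSystem (evalPiSystem X Y) ∧
    MeasurableSpace.generateFrom (evalPiSystem X Y) = evalSigma X Y :=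
  ⟨evalPiSystem_isPiSystem,
    le_antisymm generateFrom_evalPiSystem_le evalSigma_le_generateFrom_evalPiSystem⟩
end

section
/- Let X be a set, let x_0, …, x_{N-1} ∈ X, y_0, …, y_{N-1} ∈ ℝ, let m⁰ : X → ℝ and let k⁰ : X × X → ℝ be symmetric. Define recursively for i = 0, …, N−1 (assuming k^i(x_i, x_i) ≠ 0 at each step): m^{i+1}(z) = m^i(z) + (k^i(z, x_i)/k^i(x_i, x_i))·(y_i − m^i(x_i)) and k^{i+1}(w, z) = k^i(w, z) − k^i(w, x_i)·k^i(x_i, z)/k^i(x_i, x_i). If the N×N Gram matrix K with entries K_{jl} = k⁰(x_j, x_l) is invertible, then for all w, z ∈ X: m^N(z) = m⁰(z) + K(z, X₀)·K⁻¹·(y − m⁰(X₀)) and k^N(w, z) = k⁰(w, z) − K(w, X₀)·K⁻¹·K(X₀, z), where K(z, X₀) is the row vector with entries k⁰(z, x_j), K(X₀, z) is the column vector with entries k⁰(x_j, z), y = (y_0, …, y_{N-1})ᵀ and m⁰(X₀) = (m⁰(x_0), …, m⁰(x_{N-1}))ᵀ. -/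
/-! After conditioning on `x 0, …, x (i-1)`, the functions `k i · z - k 0 · z` and `m i - m 0`
lie in the span of the functions `k 0 · (x j)`, while `k i (x l) · = 0` and `m i (x l) = y l`
for `l < i`. At `i = N` these interpolation conditions form a linear system with matrix `K`
for the coefficients, which gives the batch formulas. -/

open Matrix Submodule Set

section

variable {X 𝕜 ι : Type*} [Field 𝕜] {N : ℕ}

theorem eq_add_dotProduct_inv_mulVec_of_sub_mem_span [Fintype ι] [DecidableEq ι]
    {f f₀ : X → 𝕜} {b : ι → X → 𝕜} (x : ι → X) (hf : f - f₀ ∈ span 𝕜 (range b))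
    {v : ι → 𝕜} (hv : ∀ l, f (x l) - f₀ (x l) = v l)
    {K : Matrix ι ι 𝕜} (hK : ∀ j l, K j l = b l (x j)) (hKinv : IsUnit K.det) (z : X) :
    f z = f₀ z + (fun j => b j z) ⬝ᵥ (K⁻¹ *ᵥ v) := by
  obtain ⟨c, hc⟩ := (mem_span_range_iff_exists_fun 𝕜).mp hf
  have hval : ∀ t, f t - f₀ t = (fun j => b j t) ⬝ᵥ c := fun t => by
    rw [← Pi.sub_apply, ← hc]
    simp [dotProduct, mul_comm]
  have hKc : v = K *ᵥ c := funext fun l => by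
    rw [← hv, hval]
    simp [mulVec, dotProduct, hK]
  rw [hKc, mulVec_mulVec, nonsing_inv_mul K hKinv, one_mulVec, ← hval, add_sub_cancel]

def IsCovUpdate (x : Fin N → X) (k : ℕ → X → X → 𝕜) : Prop :=
  ∀ i : Fin N, ∀ w z : X, k ((i : ℕ) + 1) w z =
    k (i : ℕ) w z - k (i : ℕ) w (x i) * k (i : ℕ) (x i) z / k (i : ℕ) (x i) (x i)

def IsMeanUpdate (x : Fin N → X) (y : Fin N → 𝕜) (m : ℕ → X → 𝕜) (k : ℕ → X → X → 𝕜) :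
    Prop :=
  ∀ i : Fin N, ∀ z : X, m ((i : ℕ) + 1) z =
    m (i : ℕ) z + k (i : ℕ) z (x i) / k (i : ℕ) (x i) (x i) * (y i - m (i : ℕ) (x i))

variable {x : Fin N → X} {y : Fin N → 𝕜} {m : ℕ → X → 𝕜} {k : ℕ → X → X → 𝕜}

namespace IsCovUpdate

theorem succ_apply (hk : IsCovUpdate x k) (i : ℕ) (hi : i < N) (w z : X) :
    k (i + 1) w z = k i w z - k i w (x ⟨i, hi⟩) * k i (x ⟨i, hi⟩) z / k i (x ⟨i, hi⟩) (x ⟨i, hi⟩) :=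
  hk ⟨i, hi⟩ w z

theorem apply_eq_zero (hk : IsCovUpdate x k) (hne : ∀ i : Fin N, k i (x i) (x i) ≠ 0) :
    ∀ i ≤ N, ∀ l : Fin N, (l : ℕ) < i → ∀ z, k i (x l) z = 0 := by
  intro i
  induction i with
  | zero => intro _ l hl; omega
  | succ i ih =>
    intro (hi : i < N) l hl z
    rw [hk.succ_apply i hi]
    rcases Nat.lt_succ_iff_lt_or_eq.mp hl with hl | hl
    · rw [ih hi.le l hl, ih hi.le l hl, zero_mul, zero_div, sub_zero]
    · obtain rfl : l = ⟨i, hi⟩ := Fin.ext hl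
      rw [mul_div_cancel_left₀ _ (hne ⟨i, hi⟩), sub_self]

theorem sub_mem_span (hk : IsCovUpdate x k) :
    ∀ i ≤ N, ∀ z, (fun w => k i w z) - (fun w => k 0 w z) ∈
      span 𝕜 (range fun j w => k 0 w (x j)) := by
  intro i
  induction i with
  | zero => intro _ z; simp
  | succ i ih =>
    intro (hi : i < N) z
    set p : Fin N := ⟨i, hi⟩
    have hstep : (fun w => k (i + 1) w z) - (fun w => k 0 w z) =
        ((fun w => k i w z) - (fun w => k 0 w z)) - (k i (x p) z / k i (x p) (x p)) •
          (((fun w => k i w (x p)) - (fun w => k 0 w (x p))) + fun w => k 0 w (x p)) := by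
      funext w
      simp only [Pi.sub_apply, Pi.add_apply, Pi.smul_apply, smul_eq_mul, hk.succ_apply i hi]
      ring
    rw [hstep]
    exact sub_mem (ih hi.le z)
      (smul_mem _ _ (add_mem (ih hi.le (x p)) (subset_span (mem_range_self p))))

theorem apply_mem_span (hk : IsCovUpdate x k) {i : ℕ} (hi : i ≤ N) (j : Fin N) :
    (fun w => k i w (x j)) ∈ span 𝕜 (range fun j w => k 0 w (x j)) := by
  simpa only [sub_add_cancel] using
    add_mem (hk.sub_mem_span i hi (x j)) (subset_span (mem_range_self j))

end IsCovUpdate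

namespace IsMeanUpdate

theorem succ_apply (hm : IsMeanUpdate x y m k) (i : ℕ) (hi : i < N) (z : X) :
    m (i + 1) z = m i z + k i z (x ⟨i, hi⟩) / k i (x ⟨i, hi⟩) (x ⟨i, hi⟩) *
      (y ⟨i, hi⟩ - m i (x ⟨i, hi⟩)) :=
  hm ⟨i, hi⟩ z

theorem apply_eq (hm : IsMeanUpdate x y m k) (hk : IsCovUpdate x k)
    (hne : ∀ i : Fin N, k i (x i) (x i) ≠ 0) :
    ∀ i ≤ N, ∀ l : Fin N, (l : ℕ) < i → m i (x l) = y l := by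
  intro i
  induction i with
  | zero => intro _ l hl; omega
  | succ i ih =>
    intro (hi : i < N) l hl
    rw [hm.succ_apply i hi]
    rcases Nat.lt_succ_iff_lt_or_eq.mp hl with hl | hl
    · rw [ih hi.le l hl, hk.apply_eq_zero hne i hi.le l hl, zero_div, zero_mul, add_zero]
    · obtain rfl : l = ⟨i, hi⟩ := Fin.ext hl
      rw [div_self (hne ⟨i, hi⟩), one_mul, add_sub_cancel]

theorem sub_mem_span (hm : IsMeanUpdate x y m k) (hk : IsCovUpdate x k) :
    ∀ i ≤ N, m i - m 0 ∈ span 𝕜 (range fun j w => k 0 w (x j)) := by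
  intro i
  induction i with
  | zero => intro _; simp
  | succ i ih =>
    intro (hi : i < N)
    set p : Fin N := ⟨i, hi⟩
    have hstep : m (i + 1) - m 0 = (m i - m 0) +
        ((y p - m i (x p)) / k i (x p) (x p)) • fun w => k i w (x p) := by
      funext w
      simp only [Pi.sub_apply, Pi.add_apply, Pi.smul_apply, smul_eq_mul, hm.succ_apply i hi]
      ring
    rw [hstep]
    exact add_mem (ih hi.le) (smul_mem _ _ (hk.apply_mem_span hi.le p))

end IsMeanUpdate

end

theorem gp_recursive_update_eq_batch_general
    {X : Type*} (N : ℕ) (x : Fin N → X) (y : Fin N → ℝ)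
    (m : ℕ → X → ℝ) (k : ℕ → X → X → ℝ)
    (hne : ∀ i : Fin N, k (i : ℕ) (x i) (x i) ≠ 0)
    (hm : ∀ i : Fin N, ∀ z : X, m ((i : ℕ) + 1) z =
      m (i : ℕ) z + k (i : ℕ) z (x i) / k (i : ℕ) (x i) (x i) * (y i - m (i : ℕ) (x i)))
    (hk : ∀ i : Fin N, ∀ w z : X, k ((i : ℕ) + 1) w z =
      k (i : ℕ) w z - k (i : ℕ) w (x i) * k (i : ℕ) (x i) z / k (i : ℕ) (x i) (x i))
    (K : Matrix (Fin N) (Fin N) ℝ) (hK : ∀ j l : Fin N, K j l = k 0 (x j) (x l))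
    (hKinv : IsUnit K.det) :
    ∀ w z : X,
      m N z = m 0 z + (fun j => k 0 z (x j)) ⬝ᵥ (K⁻¹ *ᵥ fun j => y j - m 0 (x j)) ∧
      k N w z = k 0 w z - (fun j => k 0 w (x j)) ⬝ᵥ (K⁻¹ *ᵥ fun j => k 0 (x j) z) := by
  have hk' : IsCovUpdate x k := hk
  have hm' : IsMeanUpdate x y m k := hm
  intro w z
  constructor
  · refine eq_add_dotProduct_inv_mulVec_of_sub_mem_span x (hm'.sub_mem_span hk' N le_rfl)
      (fun l => ?_) hK hKinv z
    rw [hm'.apply_eq hk' hne N le_rfl l l.isLt]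
  · have hbatch := eq_add_dotProduct_inv_mulVec_of_sub_mem_span x
      (hk'.sub_mem_span N le_rfl z) (v := -fun j => k 0 (x j) z)
      (fun l => by simp [hk'.apply_eq_zero hne N le_rfl l l.isLt]) hK hKinv w
    rwa [mulVec_neg, dotProduct_neg, ← sub_eq_add_neg] at hbatch

/-- The recursive single-measurement Gaussian-process posterior updates of the mean
and covariance functions, iterated over measurements `(x i, y i)` for
`i = 0, …, N−1`, agree with the batch formulas using the inverse of the Gram matrix
`K` of the initial covariance `k⁰` on the measurement points. -/
theorem gp_recursive_update_eq_batch
    {X : Type*} (N : ℕ) (x : Fin N → X) (y : Fin N → ℝ)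
    (m : ℕ → X → ℝ) (k : ℕ → X → X → ℝ)
    (hsym : ∀ w z : X, k 0 w z = k 0 z w)
    (hne : ∀ i : Fin N, k (i : ℕ) (x i) (x i) ≠ 0)
    (hm : ∀ i : Fin N, ∀ z : X, m ((i : ℕ) + 1) z =
      m (i : ℕ) z + k (i : ℕ) z (x i) / k (i : ℕ) (x i) (x i) * (y i - m (i : ℕ) (x i)))
    (hk : ∀ i : Fin N, ∀ w z : X, k ((i : ℕ) + 1) w z =
      k (i : ℕ) w z - k (i : ℕ) w (x i) * k (i : ℕ) (x i) z / k (i : ℕ) (x i) (x i))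
    (K : Matrix (Fin N) (Fin N) ℝ) (hK : ∀ j l : Fin N, K j l = k 0 (x j) (x l))
    (hKinv : IsUnit K.det) :
    ∀ w z : X,
      m N z = m 0 z + (fun j => k 0 z (x j)) ⬝ᵥ (K⁻¹ *ᵥ fun j => y j - m 0 (x j)) ∧
      k N w z = k 0 w z - (fun j => k 0 w (x j)) ⬝ᵥ (K⁻¹ *ᵥ fun j => k 0 (x j) z) :=
  gp_recursive_update_eq_batch_general N x y m k hne hm hk K hK hKinv
end
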